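/- arXiv:1906.06523 — 2 statements merged into one kernel-verified Lean document; each statement's English description precedes it below -/
import Mathlib

section
/- Let D_fly ↦ T(D_fly) = D_fly/V_max + Σ_{m=1}^M (Ũ_m - U_{fly,m}(D_fly))/R_{hover,m}, where V_max > 0, R_{hover,m} > 0, Ũ_m ≥ 0 are constants, D_fly = Σ_m D_{fly,m}, and for each m the throughput accumulated while flying satisfies the rate bound: reducing the flying distance associated with GBS m by ΔD_m > 0 reduces U_{fly,m} by U_{ΔD_m} with U_{ΔD_m} < (ΔD_m / V_max) · R_{hover,m}. Then for any ΔD = Σ_m ΔD_m > 0, T(D_fly - ΔD) < T(D_fly); that is, T is strictly increasing in D_fly. -/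
open Finset

/-!
Hovering uploads at rate `R m`, so the `UΔ m` bits lost by shortening the flight towards GBS `m`
cost `UΔ m / R m` extra hovering time, while the shortening saves `ΔD m / V` flying time. The
rate bound makes every such trade strictly favourable whenever `ΔD m > 0`.
-/

lemma div_le_div_of_rate_bound {u d V R : ℝ} (hR : 0 < R) (hd : 0 ≤ d)
    (hlt : 0 < d → u < d / V * R) (h0 : d = 0 → u = 0) : u / R ≤ d / V := by
  rcases hd.eq_or_lt with hd | hd
  · simp [h0 hd.symm, ← hd]
  · exact ((div_lt_iff₀ hR).2 (hlt hd)).le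

lemma sum_div_lt_sum_div_of_rate_bound {ι : Type*} {s : Finset ι} {u d R : ι → ℝ} {V : ℝ}
    (hR : ∀ i ∈ s, 0 < R i) (hd : ∀ i ∈ s, 0 ≤ d i)
    (hlt : ∀ i ∈ s, 0 < d i → u i < d i / V * R i) (h0 : ∀ i ∈ s, d i = 0 → u i = 0)
    (hpos : 0 < ∑ i ∈ s, d i) : ∑ i ∈ s, u i / R i < ∑ i ∈ s, d i / V := by
  obtain ⟨i, hi, hdi⟩ : ∃ i ∈ s, (0 : ℝ) < d i :=
    exists_lt_of_sum_lt (by simpa using hpos)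
  refine sum_lt_sum (fun j hj => div_le_div_of_rate_bound (hR j hj) (hd j hj)
    (hlt j hj) (h0 j hj)) ⟨i, hi, ?_⟩
  exact (div_lt_iff₀ (hR i hi)).2 (hlt i hi hdi)

theorem stmt2_general (M : ℕ) (V : ℝ)
    (R U D Ufly ΔD UΔ : Fin M → ℝ)
    (hR : ∀ m, 0 < R m)
    (hΔD : ∀ m, 0 ≤ ΔD m)
    (hUΔ : ∀ m, 0 < ΔD m → UΔ m < ΔD m / V * R m)
    (hUΔ0 : ∀ m, ΔD m = 0 → UΔ m = 0)
    (hpos : 0 < ∑ m, ΔD m) :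
    (∑ m, D m - ∑ m, ΔD m) / V + ∑ m, (U m - (Ufly m - UΔ m)) / R m <
      (∑ m, D m) / V + ∑ m, (U m - Ufly m) / R m := by
  have htrade : ∑ m, UΔ m / R m < ∑ m, ΔD m / V :=
    sum_div_lt_sum_div_of_rate_bound (fun m _ => hR m) (fun m _ => hΔD m)
      (fun m _ => hUΔ m) (fun m _ => hUΔ0 m) hpos
  have hsplit : ∀ m, (U m - (Ufly m - UΔ m)) / R m = (U m - Ufly m) / R m + UΔ m / R m :=
    fun m => by ring
  simp only [hsplit, sum_add_distrib, sub_div, ← sum_div] at htrade ⊢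
  linarith

/-- Proposition 2: the fly-hover-fly mission completion time
`T(D_fly) = D_fly/V_max + Σ_m (Ũ_m - U_{fly,m})/R_{hover,m}` is strictly
increasing in the flying distance: reducing the per-GBS flying distances by
`ΔD_m ≥ 0` (with total reduction positive), which reduces the flown throughput
to GBS `m` by `U_{ΔD_m} < (ΔD_m/V_max)·R_{hover,m}` whenever `ΔD_m > 0`,
strictly reduces the mission completion time. -/
theorem stmt2 (M : ℕ) (V : ℝ) (hV : 0 < V)
    (R U D Ufly ΔD UΔ : Fin M → ℝ)
    (hR : ∀ m, 0 < R m) (hU : ∀ m, 0 ≤ U m)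
    (hΔD : ∀ m, 0 ≤ ΔD m)
    (hUΔ : ∀ m, 0 < ΔD m → UΔ m < ΔD m / V * R m)
    (hUΔ0 : ∀ m, ΔD m = 0 → UΔ m = 0)
    (hpos : 0 < ∑ m, ΔD m) :
    (∑ m, D m - ∑ m, ΔD m) / V + ∑ m, (U m - (Ufly m - UΔ m)) / R m <
      (∑ m, D m) / V + ∑ m, (U m - Ufly m) / R m :=
  stmt2_general M V R U D Ufly ΔD UΔ hR hΔD hUΔ hUΔ0 hpos
end

section
/- Let η > 0, H > 0, α ≥ 2. Define f : ℝ² → ℝ by f(q) = log₂(1 + η/(‖q-b‖²+H²)^(α/2)) for a fixed b ∈ ℝ². Then for any q, q^l ∈ ℝ², f(q) ≥ B - C·(‖q-b‖² - ‖q^l-b‖²), where B = log₂(1 + η/(‖q^l-b‖²+H²)^(α/2)) and C = (α/2)(log₂ e)·η / ((‖q^l-b‖²+H²)·((‖q^l-b‖²+H²)^(α/2) + η)). -/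
lemma tangent (η p t s : ℝ) (hη : 0 < η) (hp : 0 < p) (ht : 0 < t) (hs : 0 < s) :
    Real.logb 2 (1 + η / t ^ p) -
      (p * Real.logb 2 (Real.exp 1) * η / (t * (t ^ p + η))) * (s - t) ≤
      Real.logb 2 (1 + η / s ^ p) := by
  have hlog2 : 0 < Real.log 2 := Real.log_pos one_lt_two
  have htp : (0:ℝ) < t ^ p := Real.rpow_pos_of_pos ht p
  set c : ℝ → ℝ := fun x => p * η / (x * (x ^ p + η) * Real.log 2) with hc
  have hCeq : p * Real.logb 2 (Real.exp 1) * η / (t * (t ^ p + η)) = c t := by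
    simp only [hc, Real.logb, Real.log_exp]
    field_simp
  set F : ℝ → ℝ := fun y => Real.logb 2 (1 + η / y ^ p) + c t * y with hF
  have hder : ∀ x : ℝ, 0 < x → HasDerivAt F (c t - c x) x := by
    intro x hx
    have hA : (0:ℝ) < x ^ p := Real.rpow_pos_of_pos hx p
    have h1 : HasDerivAt (fun y : ℝ => y ^ p) (p * x ^ (p - 1)) x :=
      Real.hasDerivAt_rpow_const (Or.inl hx.ne')
    have h2 : HasDerivAt (fun y : ℝ => 1 + η * (y ^ p)⁻¹)
        (η * (-(p * x ^ (p - 1)) / (x ^ p) ^ 2)) x :=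
      ((h1.inv hA.ne').const_mul η).const_add 1
    have hu : 0 < 1 + η * (x ^ p)⁻¹ := by positivity
    have h3 := (h2.log hu.ne').div_const (Real.log 2)
    have h4 := h3.add ((hasDerivAt_id x).const_mul (c t))
    have hfun : (fun y => Real.log (1 + η * (y ^ p)⁻¹) / Real.log 2 + c t * y) = F := by
      funext y; simp [hF, Real.logb, div_eq_mul_inv]
    simp only [id, Pi.add_def] at h4
    rw [hfun] at h4
    refine h4.congr_deriv ?_
    symm
    have hxp : x ^ (p - 1) = x ^ p / x := by
      rw [Real.rpow_sub hx, Real.rpow_one]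
    rw [hxp]
    simp only [hc]
    field_simp
    ring
  have hcmono : ∀ x y : ℝ, 0 < x → x ≤ y → c y ≤ c x := by
    intro x y hx hxy
    have hy : 0 < y := hx.trans_le hxy
    have h1 : x ^ p ≤ y ^ p := Real.rpow_le_rpow hx.le hxy hp.le
    have hxA : (0:ℝ) < x ^ p := Real.rpow_pos_of_pos hx p
    have hden : x * (x ^ p + η) * Real.log 2 ≤ y * (y ^ p + η) * Real.log 2 := by
      have : x * (x ^ p + η) ≤ y * (y ^ p + η) := by nlinarith
      nlinarith
    simp only [hc]
    apply div_le_div_of_nonneg_left (by positivity) (by positivity) hden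
  rcases le_total t s with hts | hst
  · have hmono : MonotoneOn F (Set.Icc t s) := by
      apply monotoneOn_of_deriv_nonneg (convex_Icc t s)
      · intro x hx
        exact ((hder x (ht.trans_le hx.1)).continuousAt).continuousWithinAt
      · intro x hx
        rw [interior_Icc] at hx
        exact ((hder x (ht.trans hx.1)).differentiableAt).differentiableWithinAt
      · intro x hx
        rw [interior_Icc] at hx
        rw [(hder x (ht.trans hx.1)).deriv]
        have := hcmono t x ht hx.1.le
        linarith
    have hFle : F t ≤ F s :=
      hmono (Set.left_mem_Icc.2 hts) (Set.right_mem_Icc.2 hts) hts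
    simp only [hF] at hFle
    rw [hCeq]
    nlinarith [mul_sub (c t) s t]
  · have hmono : AntitoneOn F (Set.Icc s t) := by
      apply antitoneOn_of_deriv_nonpos (convex_Icc s t)
      · intro x hx
        exact ((hder x (hs.trans_le hx.1)).continuousAt).continuousWithinAt
      · intro x hx
        rw [interior_Icc] at hx
        exact ((hder x (hs.trans hx.1)).differentiableAt).differentiableWithinAt
      · intro x hx
        rw [interior_Icc] at hx
        rw [(hder x (hs.trans hx.1)).deriv]
        have := hcmono x t (hs.trans hx.1) hx.2.le
        linarith
    have hFle : F t ≤ F s :=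
      hmono (Set.left_mem_Icc.2 hst) (Set.right_mem_Icc.2 hst) hst
    simp only [hF] at hFle
    rw [hCeq]
    nlinarith [mul_sub (c t) s t]

/-- SCA lower bound (38) for the rate function: with
`B = log₂(1 + η/(‖q^l-b‖²+H²)^(α/2))` and
`C = (α/2)(log₂ e)η / ((‖q^l-b‖²+H²)((‖q^l-b‖²+H²)^(α/2) + η))`,
for all `q` one has `f(q) ≥ B - C(‖q-b‖² - ‖q^l-b‖²)`. -/
theorem stmt9 (η H α : ℝ) (hη : 0 < η) (hH : 0 < H) (hα : 2 ≤ α)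
    (b q ql : EuclideanSpace ℝ (Fin 2)) :
    Real.logb 2 (1 + η / (‖ql - b‖ ^ 2 + H ^ 2) ^ (α / 2)) -
      ((α / 2) * Real.logb 2 (Real.exp 1) * η /
          ((‖ql - b‖ ^ 2 + H ^ 2) * ((‖ql - b‖ ^ 2 + H ^ 2) ^ (α / 2) + η))) *
        (‖q - b‖ ^ 2 - ‖ql - b‖ ^ 2) ≤
      Real.logb 2 (1 + η / (‖q - b‖ ^ 2 + H ^ 2) ^ (α / 2)) := by
  have h1 : 0 < ‖ql - b‖ ^ 2 + H ^ 2 := by positivity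
  have h2 : 0 < ‖q - b‖ ^ 2 + H ^ 2 := by positivity
  have := tangent η (α / 2) (‖ql - b‖ ^ 2 + H ^ 2) (‖q - b‖ ^ 2 + H ^ 2) hη
    (by linarith) h1 h2
  have e : ‖q - b‖ ^ 2 + H ^ 2 - (‖ql - b‖ ^ 2 + H ^ 2)
      = ‖q - b‖ ^ 2 - ‖ql - b‖ ^ 2 := by ring
  rw [e] at this
  exact this
end
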